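/- (Sufficiency direction.) Suppose for every x ∈ V there exists a(x) > 0 such that ∏_{y ∈ S(x)} Σ_{u ∈ {−1,1}} exp(Jβ ρ(t,u) + ρ(u,h_y)) = a(x) exp(ρ(t,h_x)) for t ∈ {−1,1}. Then the partition functions satisfy Z_{n−1}^h · ∏_{x ∈ W_{n−1}} a(x) = Z_n^h, and the kernels ζ_n(·,h) are consistent: Σ_{ω_n} ζ_n(σ_{n−1}ω_n, h) = ζ_{n−1}(σ_{n−1}, h). -/

import Mathlib

open scoped BigOperators

variable {V : Type*} [DecidableEq V]

/-- Spheres `Wₙ` around the root of a rooted tree with children map `S`. -/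
def treeSphere (root : V) (S : V → Finset V) : ℕ → Finset V
  | 0 => {root}
  | n + 1 => (treeSphere root S n).biUnion S

/-- Balls `Vₙ = W₀ ∪ ⋯ ∪ Wₙ`. -/
def treeBall (root : V) (S : V → Finset V) (n : ℕ) : Finset V :=
  (Finset.range (n + 1)).biUnion (treeSphere root S)

/-- The Cayley tree of order `k`, rooted at `root`, with children map `S`. -/
structure CayleyTree (V : Type*) [DecidableEq V] (k : ℕ) where
  root : V
  S : V → Finset V
  card_S_root : (S root).card = k + 1
  card_S : ∀ x, x ≠ root → (S x).card = k
  root_not_child : ∀ x, root ∉ S x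
  parent_unique : ∀ y, y ≠ root → ∃! x, y ∈ S x
  reach : ∀ y, ∃ n, y ∈ treeSphere root S n

variable {k : ℕ} (T : CayleyTree V k)

/-- The exponent of the kernel (2.6):
`Jβ Σ_{⟨x,y⟩ ⊆ Vₙ} ρ(σ(x),σ(y)) + Σ_{x ∈ Wₙ} ρ(σ(x), h_x)`;
spins take values in `{-1,1} ≃ ℤˣ`. -/
noncomputable def kernelEnergy (J β : ℝ) (ρ : ℤˣ → ℝ → ℝ) (h : V → ℝ)
    (n : ℕ) (σ : V → ℤˣ) : ℝ :=
  J * β * ∑ x ∈ treeBall T.root T.S n, ∑ y ∈ T.S x ∩ treeBall T.root T.S n,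
      ρ (σ x) ((σ y : ℤ) : ℝ)
    + ∑ x ∈ treeSphere T.root T.S n, ρ (σ x) (h x)

/-- Extend a configuration on the ball `Vₙ` to all of `V` (by `+1` outside;
the energy only depends on coordinates in `Vₙ`). -/
def extendBall (n : ℕ) (τ : treeBall T.root T.S n → ℤˣ) : V → ℤˣ :=
  fun x => if hx : x ∈ treeBall T.root T.S n then τ ⟨x, hx⟩ else 1

/-- The partition function `Z_n^h`. -/
noncomputable def partFn (J β : ℝ) (ρ : ℤˣ → ℝ → ℝ) (h : V → ℝ) (n : ℕ) : ℝ :=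
  ∑ τ : treeBall T.root T.S n → ℤˣ,
    Real.exp (kernelEnergy T J β ρ h n (extendBall T n τ))

/-- The kernel (2.6): `ζₙ(σₙ, h) = (Z_n^h)⁻¹ exp( … )`. -/
noncomputable def kernel (J β : ℝ) (ρ : ℤˣ → ℝ → ℝ) (h : V → ℝ) (n : ℕ)
    (τ : treeBall T.root T.S n → ℤˣ) : ℝ :=
  Real.exp (kernelEnergy T J β ρ h n (extendBall T n τ)) / partFn T J β ρ h n

/-- The configuration on `V_{n+1}` built from `σ` on `Vₙ` and `ω` on the
sphere `W_{n+1}`. -/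
def mergeConf (n : ℕ) (σ : treeBall T.root T.S n → ℤˣ)
    (ω : treeSphere T.root T.S (n + 1) → ℤˣ) :
    treeBall T.root T.S (n + 1) → ℤˣ :=
  fun x => if hx : (x : V) ∈ treeBall T.root T.S n then σ ⟨x, hx⟩
    else if hx' : (x : V) ∈ treeSphere T.root T.S (n + 1) then ω ⟨x, hx'⟩
    else 1

/-! Summing the weight of a configuration on `V_{n+1}` over the spins on the new sphere `W_{n+1}`:
each new vertex `y` interacts only with its parent and with its field `h_y`, so the sum factorizes
over `y`.  Grouping the factors by parent `x ∈ W_n`, the boundary equation turns them into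
`a(x) exp ρ(σ(x), h_x)`, which trades the boundary term of `V_{n+1}` for that of `V_n`.  Hence
`Σ_ω exp H_{n+1}(σω) = (∏_{x ∈ W_n} a(x)) exp H_n(σ)`; summing over `σ` gives the recursion for
the partition functions, and dividing by it gives consistency. -/

open Finset

theorem mem_treeSphere_succ {root y : V} {S : V → Finset V} {n : ℕ} :
    y ∈ treeSphere root S (n + 1) ↔ ∃ x ∈ treeSphere root S n, y ∈ S x :=
  mem_biUnion

theorem mem_treeBall {root y : V} {S : V → Finset V} {n : ℕ} :
    y ∈ treeBall root S n ↔ ∃ m ≤ n, y ∈ treeSphere root S m := by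
  simp [treeBall]

theorem treeBall_succ (root : V) (S : V → Finset V) (n : ℕ) :
    treeBall root S (n + 1) = treeBall root S n ∪ treeSphere root S (n + 1) := by
  rw [treeBall, range_add_one, biUnion_insert, union_comm]
  rfl

theorem treeSphere_subset_treeBall {root : V} {S : V → Finset V} {m n : ℕ} (h : m ≤ n) :
    treeSphere root S m ⊆ treeBall root S n :=
  fun _ hy => mem_treeBall.mpr ⟨m, h, hy⟩

theorem treeBall_subset_treeBall_succ (root : V) (S : V → Finset V) (n : ℕ) :
    treeBall root S n ⊆ treeBall root S (n + 1) := by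
  rw [treeBall_succ]
  exact subset_union_left

namespace CayleyTree

theorem ne_root_of_mem_S {x y : V} (hy : y ∈ T.S x) : y ≠ T.root :=
  fun h => T.root_not_child x (h ▸ hy)

theorem eq_of_mem_S {x x' y : V} (hx : y ∈ T.S x) (hx' : y ∈ T.S x') : x = x' :=
  (T.parent_unique y (T.ne_root_of_mem_S hx)).unique hx hx'

theorem eq_of_mem_treeSphere {m n : ℕ} {y : V} (hm : y ∈ treeSphere T.root T.S m)
    (hn : y ∈ treeSphere T.root T.S n) : m = n := by
  induction m generalizing n y with
  | zero =>
    cases n with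
    | zero => rfl
    | succ n =>
      obtain ⟨x, -, hx⟩ := mem_treeSphere_succ.mp hn
      exact absurd (mem_singleton.mp hm) (T.ne_root_of_mem_S hx)
  | succ m ih =>
    cases n with
    | zero =>
      obtain ⟨x, -, hx⟩ := mem_treeSphere_succ.mp hm
      exact absurd (mem_singleton.mp hn) (T.ne_root_of_mem_S hx)
    | succ n =>
      obtain ⟨x, hxm, hyx⟩ := mem_treeSphere_succ.mp hm
      obtain ⟨x', hxn, hyx'⟩ := mem_treeSphere_succ.mp hn
      rw [ih hxm (T.eq_of_mem_S hyx hyx' ▸ hxn)]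

theorem disjoint_treeBall_treeSphere {n m : ℕ} (h : n < m) :
    Disjoint (treeBall T.root T.S n) (treeSphere T.root T.S m) := by
  refine disjoint_left.mpr fun y hy hym => ?_
  obtain ⟨j, hj, hyj⟩ := mem_treeBall.mp hy
  exact absurd (T.eq_of_mem_treeSphere hyj hym) (by omega)

theorem S_subset_treeSphere_succ {x : V} {n : ℕ} (hx : x ∈ treeSphere T.root T.S n) :
    T.S x ⊆ treeSphere T.root T.S (n + 1) :=
  fun _ hy => mem_treeSphere_succ.mpr ⟨x, hx, hy⟩

theorem mem_treeSphere_of_mem_S {x y : V} {n : ℕ} (hy : y ∈ T.S x)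
    (hyn : y ∈ treeSphere T.root T.S (n + 1)) : x ∈ treeSphere T.root T.S n := by
  obtain ⟨x', hx', hyx'⟩ := mem_treeSphere_succ.mp hyn
  rwa [T.eq_of_mem_S hy hyx']

theorem pairwiseDisjoint_S (s : Set V) : s.PairwiseDisjoint T.S :=
  fun _ _ _ _ hne => disjoint_left.mpr fun _ hx hx' => hne (T.eq_of_mem_S hx hx')

theorem sum_edges_treeBall_succ {M : Type*} [AddCommMonoid M] (f : V → V → M) (n : ℕ) :
    ∑ x ∈ treeBall T.root T.S (n + 1), ∑ y ∈ T.S x ∩ treeBall T.root T.S (n + 1), f x y =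
      ∑ x ∈ treeBall T.root T.S n, ∑ y ∈ T.S x ∩ treeBall T.root T.S n, f x y +
        ∑ x ∈ treeSphere T.root T.S n, ∑ y ∈ T.S x, f x y := by
  have hdisj := T.disjoint_treeBall_treeSphere (Nat.lt_add_one n)
  have hleaves : ∑ x ∈ treeBall T.root T.S (n + 1), ∑ y ∈ T.S x ∩ treeBall T.root T.S (n + 1),
      f x y = ∑ x ∈ treeBall T.root T.S n, ∑ y ∈ T.S x ∩ treeBall T.root T.S (n + 1), f x y := by
    refine (sum_subset (treeBall_subset_treeBall_succ _ _ n) fun x hx hxn => ?_).symm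
    have hx' : x ∈ treeSphere T.root T.S (n + 1) := by
      simpa [treeBall_succ, hxn] using hx
    rw [disjoint_iff_inter_eq_empty.mp ((T.disjoint_treeBall_treeSphere (Nat.lt_add_one _)).symm
      |>.mono_left (T.S_subset_treeSphere_succ hx')), sum_empty]
  have hnew : ∑ x ∈ treeBall T.root T.S n, ∑ y ∈ T.S x ∩ treeSphere T.root T.S (n + 1), f x y =
      ∑ x ∈ treeSphere T.root T.S n, ∑ y ∈ T.S x, f x y := by
    rw [← sum_subset (treeSphere_subset_treeBall le_rfl) fun x _ hx => sum_eq_zero fun y hy =>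
      absurd (T.mem_treeSphere_of_mem_S (mem_inter.mp hy).1 (mem_inter.mp hy).2) hx]
    exact sum_congr rfl fun x hx => by rw [inter_eq_left.mpr (T.S_subset_treeSphere_succ hx)]
  rw [hleaves, ← hnew, ← sum_add_distrib]
  refine sum_congr rfl fun x _ => ?_
  rw [treeBall_succ, inter_union_distrib_left,
    sum_union (hdisj.mono inter_subset_right inter_subset_right)]

noncomputable def parent (y : V) : V :=
  if hy : y = T.root then y else (T.parent_unique y hy).choose

theorem parent_eq_of_mem_S {x y : V} (hy : y ∈ T.S x) : T.parent y = x := by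
  have hy' := T.ne_root_of_mem_S hy
  rw [parent, dif_neg hy']
  exact T.eq_of_mem_S (T.parent_unique y hy').choose_spec.1 hy

@[to_additive]
theorem prod_treeSphere_succ_parent {M : Type*} [CommMonoid M] (g : V → V → M) (n : ℕ) :
    ∏ y : treeSphere T.root T.S (n + 1), g (T.parent y) y =
      ∏ x ∈ treeSphere T.root T.S n, ∏ y ∈ T.S x, g x y := by
  rw [prod_coe_sort (treeSphere T.root T.S (n + 1)) fun y => g (T.parent y) y, treeSphere,
    prod_biUnion (T.pairwiseDisjoint_S _)]
  exact prod_congr rfl fun x _ => prod_congr rfl fun y hy => by rw [T.parent_eq_of_mem_S hy]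

variable (n : ℕ) (σ : treeBall T.root T.S n → ℤˣ) (ω : treeSphere T.root T.S (n + 1) → ℤˣ)

theorem mergeConf_of_mem_treeBall (x : treeBall T.root T.S (n + 1))
    (hx : (x : V) ∈ treeBall T.root T.S n) : mergeConf T n σ ω x = σ ⟨x, hx⟩ :=
  dif_pos hx

theorem mergeConf_of_mem_treeSphere (x : treeBall T.root T.S (n + 1))
    (hx : (x : V) ∈ treeSphere T.root T.S (n + 1)) : mergeConf T n σ ω x = ω ⟨x, hx⟩ := by
  have hxn := disjoint_right.mp (T.disjoint_treeBall_treeSphere (Nat.lt_add_one n)) hx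
  simp only [mergeConf, dif_neg hxn, dif_pos hx]

def mergeEquiv :
    (treeBall T.root T.S n → ℤˣ) × (treeSphere T.root T.S (n + 1) → ℤˣ) ≃
      (treeBall T.root T.S (n + 1) → ℤˣ) where
  toFun p := mergeConf T n p.1 p.2
  invFun τ := (fun x => τ ⟨x, treeBall_subset_treeBall_succ _ _ n x.2⟩,
    fun y => τ ⟨y, treeSphere_subset_treeBall le_rfl y.2⟩)
  left_inv := by
    rintro ⟨σ, ω⟩
    refine Prod.ext (funext fun x => ?_) (funext fun y => ?_)
    · exact T.mergeConf_of_mem_treeBall n σ ω ⟨x, _⟩ x.2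
    · exact T.mergeConf_of_mem_treeSphere n σ ω ⟨y, _⟩ y.2
  right_inv τ := by
    funext x
    by_cases hx : (x : V) ∈ treeBall T.root T.S n
    · exact T.mergeConf_of_mem_treeBall n _ _ x hx
    · have hx' : (x : V) ∈ treeSphere T.root T.S (n + 1) := by
        simpa [treeBall_succ, hx] using x.2
      exact T.mergeConf_of_mem_treeSphere n _ _ x hx'

theorem extendBall_mergeConf_of_mem_treeBall {x : V} (hx : x ∈ treeBall T.root T.S n) :
    extendBall T (n + 1) (mergeConf T n σ ω) x = extendBall T n σ x := by
  rw [extendBall, dif_pos (treeBall_subset_treeBall_succ _ _ n hx), extendBall, dif_pos hx,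
    T.mergeConf_of_mem_treeBall n σ ω _ hx]

theorem extendBall_mergeConf_of_mem_treeSphere (y : treeSphere T.root T.S (n + 1)) :
    extendBall T (n + 1) (mergeConf T n σ ω) y = ω y := by
  rw [extendBall, dif_pos (treeSphere_subset_treeBall le_rfl y.2),
    T.mergeConf_of_mem_treeSphere n σ ω _ y.2]

variable (J β : ℝ) (ρ : ℤˣ → ℝ → ℝ) (h : V → ℝ)

theorem kernelEnergy_extendBall_mergeConf :
    kernelEnergy T J β ρ h (n + 1) (extendBall T (n + 1) (mergeConf T n σ ω)) =
      kernelEnergy T J β ρ h n (extendBall T n σ)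
        - ∑ x ∈ treeSphere T.root T.S n, ρ (extendBall T n σ x) (h x)
        + ∑ y : treeSphere T.root T.S (n + 1),
            (J * β * ρ (extendBall T n σ (T.parent y)) ((ω y : ℤ) : ℝ) + ρ (ω y) (h y)) := by
  set τ := extendBall T (n + 1) (mergeConf T n σ ω)
  have hball : ∀ x ∈ treeBall T.root T.S n, τ x = extendBall T n σ x :=
    fun x hx => T.extendBall_mergeConf_of_mem_treeBall n σ ω hx
  have hedges : ∑ x ∈ treeBall T.root T.S n, ∑ y ∈ T.S x ∩ treeBall T.root T.S n,
      ρ (τ x) ((τ y : ℤ) : ℝ) = ∑ x ∈ treeBall T.root T.S n, ∑ y ∈ T.S x ∩ treeBall T.root T.S n,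
      ρ (extendBall T n σ x) ((extendBall T n σ y : ℤ) : ℝ) :=
    sum_congr rfl fun x hx => sum_congr rfl fun y hy => by
      rw [hball x hx, hball y (mem_inter.mp hy).2]
  have hcross : ∑ x ∈ treeSphere T.root T.S n, ∑ y ∈ T.S x, ρ (τ x) ((τ y : ℤ) : ℝ) =
      ∑ x ∈ treeSphere T.root T.S n, ∑ y ∈ T.S x, ρ (extendBall T n σ x) ((τ y : ℤ) : ℝ) :=
    sum_congr rfl fun x hx => by rw [hball x (treeSphere_subset_treeBall le_rfl hx)]
  have hboundary : ∑ y ∈ treeSphere T.root T.S (n + 1), ρ (τ y) (h y) =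
      ∑ x ∈ treeSphere T.root T.S n, ∑ y ∈ T.S x, ρ (τ y) (h y) :=
    sum_biUnion (T.pairwiseDisjoint_S _)
  simp_rw [← T.extendBall_mergeConf_of_mem_treeSphere n σ ω]
  rw [T.sum_treeSphere_succ_parent
      (fun x y => J * β * ρ (extendBall T n σ x) ((τ y : ℤ) : ℝ) + ρ (τ y) (h y)),
    kernelEnergy, kernelEnergy, T.sum_edges_treeBall_succ, hedges, hcross, hboundary]
  simp only [sum_add_distrib, ← mul_sum]
  ring

end CayleyTree

open CayleyTree

variable (J β : ℝ) (ρ : ℤˣ → ℝ → ℝ) (h : V → ℝ) {a : V → ℝ}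

def BoundaryEquation (a : V → ℝ) : Prop :=
  ∀ (x : V) (t : ℤˣ),
    ∏ y ∈ T.S x, ∑ u : ℤˣ, Real.exp (J * β * ρ t ((u : ℤ) : ℝ) + ρ u (h y)) =
      a x * Real.exp (ρ t (h x))

theorem sum_exp_kernelEnergy_mergeConf
    (heq : BoundaryEquation T J β ρ h a)
    (n : ℕ) (σ : treeBall T.root T.S n → ℤˣ) :
    ∑ ω : treeSphere T.root T.S (n + 1) → ℤˣ,
        Real.exp (kernelEnergy T J β ρ h (n + 1) (extendBall T (n + 1) (mergeConf T n σ ω))) =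
      Real.exp (kernelEnergy T J β ρ h n (extendBall T n σ)) *
        ∏ x ∈ treeSphere T.root T.S n, a x := by
  set s := extendBall T n σ
  have hfactor : ∑ ω : treeSphere T.root T.S (n + 1) → ℤˣ, ∏ y : treeSphere T.root T.S (n + 1),
      Real.exp (J * β * ρ (s (T.parent y)) ((ω y : ℤ) : ℝ) + ρ (ω y) (h y)) =
      ∏ x ∈ treeSphere T.root T.S n, a x * Real.exp (ρ (s x) (h x)) := by
    rw [← Fintype.prod_sum fun (y : treeSphere T.root T.S (n + 1)) (u : ℤˣ) =>
        Real.exp (J * β * ρ (s (T.parent y)) ((u : ℤ) : ℝ) + ρ u (h y)),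
      T.prod_treeSphere_succ_parent fun x y =>
        ∑ u : ℤˣ, Real.exp (J * β * ρ (s x) ((u : ℤ) : ℝ) + ρ u (h y))]
    exact prod_congr rfl fun x _ => heq x (s x)
  calc _ = Real.exp (kernelEnergy T J β ρ h n s - ∑ x ∈ treeSphere T.root T.S n, ρ (s x) (h x)) *
        ∑ ω : treeSphere T.root T.S (n + 1) → ℤˣ, ∏ y : treeSphere T.root T.S (n + 1),
          Real.exp (J * β * ρ (s (T.parent y)) ((ω y : ℤ) : ℝ) + ρ (ω y) (h y)) := by
        rw [mul_sum]
        exact sum_congr rfl fun ω _ => by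
          rw [kernelEnergy_extendBall_mergeConf, Real.exp_add, Real.exp_sum]
    _ = _ := by
        rw [hfactor, prod_mul_distrib, ← Real.exp_sum, Real.exp_sub]
        field_simp

theorem partFn_succ
    (heq : BoundaryEquation T J β ρ h a) (n : ℕ) :
    partFn T J β ρ h (n + 1) = partFn T J β ρ h n * ∏ x ∈ treeSphere T.root T.S n, a x := by
  rw [partFn, partFn, ← (T.mergeEquiv n).sum_comp, Fintype.sum_prod_type, sum_mul]
  exact sum_congr rfl fun σ _ => sum_exp_kernelEnergy_mergeConf T J β ρ h heq n σ

theorem sum_kernel_mergeConf (ha : ∀ x, 0 < a x)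
    (heq : BoundaryEquation T J β ρ h a)
    (n : ℕ) (σ : treeBall T.root T.S n → ℤˣ) :
    ∑ ω : treeSphere T.root T.S (n + 1) → ℤˣ, kernel T J β ρ h (n + 1) (mergeConf T n σ ω) =
      kernel T J β ρ h n σ := by
  simp only [kernel]
  rw [← sum_div, sum_exp_kernelEnergy_mergeConf T J β ρ h heq, partFn_succ T J β ρ h heq,
    mul_div_mul_right _ _ (prod_pos fun x _ => ha x).ne']

/-- Sufficiency: if for every `x ∈ V` there is `a(x) > 0` with
`∏_{y ∈ S(x)} Σ_u exp(Jβ ρ(t,u) + ρ(u,h_y)) = a(x) exp(ρ(t,h_x))` for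
`t ∈ {-1,1}`, then the partition functions satisfy
`Z_n^h ∏_{x ∈ W_n} a(x) = Z_{n+1}^h` and the kernels (2.6) are consistent. -/
theorem kernels_consistent_of_boundary_equation (J β : ℝ)
    (ρ : ℤˣ → ℝ → ℝ) (h : V → ℝ) (a : V → ℝ) (ha : ∀ x, 0 < a x)
    (heq : ∀ (x : V) (t : ℤˣ),
      (∏ y ∈ T.S x,
          ∑ u : ℤˣ, Real.exp (J * β * ρ t ((u : ℤ) : ℝ) + ρ u (h y))) =
        a x * Real.exp (ρ t (h x))) :
    (∀ n : ℕ,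
        partFn T J β ρ h n * ∏ x ∈ treeSphere T.root T.S n, a x =
          partFn T J β ρ h (n + 1)) ∧
      ∀ (n : ℕ) (σ : treeBall T.root T.S n → ℤˣ),
        (∑ ω : treeSphere T.root T.S (n + 1) → ℤˣ,
            kernel T J β ρ h (n + 1) (mergeConf T n σ ω)) =
          kernel T J β ρ h n σ :=
  ⟨fun n => (partFn_succ T J β ρ h heq n).symm, sum_kernel_mergeConf T J β ρ h ha heq⟩
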